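/- For k ≥ r ≥ 3, N₂ ≥ 0 and m ≥ 0, let π be a partition in ℰ(k,r) such that there are exactly N₂ parts marked with 2 in GG(π). Then π is a partition in C_<(k,r|m) if and only if m ≥ N₂. -/

import Mathlib

namespace Bressoud

/-- A partition: a weakly decreasing list of positive integers. -/
structure Partition where
  parts : List ℕ
  pos : ∀ x ∈ parts, 0 < x
  sorted : parts.Pairwise (· ≥ ·)

namespace Partition

/-- `|π|`, the sum of the parts of `π`. -/
def size (π : Partition) : ℕ := π.parts.sum

/-- `ℓ(π)`, the number of parts of `π`. -/
def numParts (π : Partition) : ℕ := π.parts.length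

end Partition

lemma exists_pos_not_mem (s : List ℕ) : ∃ n, 0 < n ∧ n ∉ s := by
  refine ⟨s.sum + 1, Nat.succ_pos _, fun h => ?_⟩
  have := List.single_le_sum (l := s) (fun x _ => Nat.zero_le x) _ h
  omega

/-- The least positive integer not occurring in `s`. -/
def mex1 (s : List ℕ) : ℕ := Nat.find (exists_pos_not_mem s)

/-- Parts `p ≥ q` conflict (must receive different marks) when `p - q ≤ 2`,
with strict inequality when `p` is odd. -/
def conflict (p q : ℕ) : Bool :=
  if p % 2 = 1 then decide (p - q < 2) else decide (p - q ≤ 2)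

/-- Greedy computation of the Göllnitz–Gordon marking: the parts are processed
from smallest to largest (second argument: remaining parts in increasing
order; first argument: already processed parts with their marks), and each
part receives the least positive mark different from the marks of all already
processed conflicting parts. -/
def ggAux : List (ℕ × ℕ) → List ℕ → List (ℕ × ℕ)
  | acc, [] => acc
  | acc, p :: rest =>
      ggAux ((p, mex1 ((acc.filter fun q => conflict p q.1).map Prod.snd)) :: acc) rest

/-- The Göllnitz–Gordon marking `GG(π)` of `π`, as a list of (part, mark)
pairs in decreasing order of parts. -/
def ggMarks (π : Partition) : List (ℕ × ℕ) := ggAux [] π.parts.reverse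

/-- There is an `m`-marked part equal to `x` in `GG(π)`. -/
def Marked (π : Partition) (x m : ℕ) : Prop := (x, m) ∈ ggMarks π

instance (π : Partition) (x m : ℕ) : Decidable (Marked π x m) := by
  unfold Marked; infer_instance

/-- The `i`-th row of `GG(π)`: the `i`-marked parts, in decreasing order. -/
def row (π : Partition) (i : ℕ) : List ℕ :=
  ((ggMarks π).filter fun q => q.2 == i).map Prod.fst

/-- `N_i(π)`: the number of `i`-marked parts of `π`. -/
def Nmk (π : Partition) (i : ℕ) : ℕ := (row π i).length

/-- `π^{(i)}_j` as a natural number (meaningful for `1 ≤ j ≤ N_i(π)`;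
junk value `0` otherwise). -/
def nth (π : Partition) (i j : ℕ) : ℕ := (row π i).getD (j - 1) 0

/-- The canonical embedding of the natural numbers into `EReal`. -/
noncomputable def natE (n : ℕ) : EReal := ((n : ℝ) : EReal)

/-- `π^{(i)}_j` as an extended real, with the conventions `π^{(i)}_0 = +∞`
and `π^{(i)}_j = -∞` for `j > N_i(π)`. -/
noncomputable def rowVal (π : Partition) (i j : ℕ) : EReal :=
  if j = 0 then ⊤
  else
    match (row π i)[j - 1]? with
    | some x => natE x
    | none => ⊥

/-- The largest `l ≥ 0` such that there is no odd part of `π` greater than or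
equal to `π^{(2)}_l` (the indices `1 ≤ j ≤ N₂(π)` with this property form an
initial segment, so this is also their number). -/
def bigL (π : Partition) : ℕ :=
  ((List.range' 1 (Nmk π 2)).filter fun j =>
    decide (∀ x ∈ π.parts, x % 2 = 1 → x < nth π 2 j)).length

/-- `startPair π b = (starting type of π^{(2)}_b, s_b(π))` for `1 ≤ b ≤ N₂(π)`.
Starting types are encoded by integers: `-1` stands for `s₋₁`, and `0,1,2,3`
for `s₀,s₁,s₂,s₃`; the value `9` is a junk value used when no case applies. -/
def startPair (π : Partition) : ℕ → ℤ × ℕ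
  | 0 => (9, 0)
  | b + 1 =>
    let v := nth π 2 (b + 1)
    if bigL π < b + 1 then (-1, 0)
    else
      let okLow : Bool :=
        if b = 0 then !decide ((v + 2) ∈ π.parts)
        else !decide (Marked π (v + 2) 1) || decide ((startPair π b).2 = v + 2)
      let ok2 : Bool :=
        if b = 0 then decide (Marked π (v + 2) 1)
        else decide (Marked π (v + 2) 1) && !decide ((startPair π b).2 = v + 2)
      if decide (Marked π (v - 1) 1) && okLow then (0, v - 1)
      else if decide (Marked π (v - 2) 1) && okLow then (1, v - 2)
      else if ok2 then (2, v + 2)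
      else if decide (Marked π v 1) then (3, v)
      else (9, 0)

/-- The starting type of `π^{(2)}_b`, encoded as an integer. -/
def startType (π : Partition) (b : ℕ) : ℤ := (startPair π b).1

/-- The set `C(k,r)`: partitions with no repeated odd part, in which the parts
equal to `1` and `2` have marks at most `r - 1`, and whose Göllnitz–Gordon
marking has at most `k - 1` rows. -/
def C (k r : ℕ) : Set Partition :=
  { π | (∀ x, x % 2 = 1 → π.parts.count x ≤ 1) ∧
        (∀ x m, Marked π x m → x ≤ 2 → m ≤ r - 1) ∧
        (∀ x m, Marked π x m → m ≤ k - 1) }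

/-- The set `C_<(k,r|p,t)`. -/
noncomputable def Clt (k r p t : ℕ) : Set Partition :=
  { π | π ∈ C k r ∧
        (∀ x ∈ π.parts, x % 2 = 1 → x < 2 * t + 1) ∧
        rowVal π 2 (p + 1) < natE (2 * t + 1) ∧
        natE (2 * t + 1) < rowVal π 2 p ∧
        (rowVal π 2 p = natE (2 * t + 2) →
          startType π p = 2 ∨ startType π p = 3) ∧
        (rowVal π 2 (p + 1) = natE (2 * t) →
          startType π (p + 1) = 0 ∨ startType π (p + 1) = 1) }

/-- The set `C_=(k,r|p,t)`. -/
noncomputable def Ceq (k r p t : ℕ) : Set Partition :=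
  { π | π ∈ C k r ∧
        (2 * t + 1) ∈ π.parts ∧
        (∀ x ∈ π.parts, x % 2 = 1 → x ≤ 2 * t + 1) ∧
        (∀ m, Marked π (2 * t + 1) m → m ≤ 2) ∧
        natE (2 * t + 2) ≤ rowVal π 2 p ∧
        rowVal π 2 (p + 1) ≤ natE (2 * t + 2) ∧
        ((∃ j, 1 ≤ j ∧ j ≤ Nmk π 2 ∧ nth π 2 j = 2 * t + 2 ∧ startType π j = 0) →
          rowVal π 2 (p + 1) = natE (2 * t + 2) ∧
          ∃ i, 1 ≤ i ∧ i ≤ p + 1 ∧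
            nth π 2 i = 2 * t + 2 + 4 * (p + 1 - i) ∧
            π.parts.count (2 * t + 2 + 4 * (p + 1 - i)) = 1) ∧
        ((∃ j, 1 ≤ j ∧ j ≤ Nmk π 2 ∧ nth π 2 j = 2 * t + 2 ∧ startType π j = 2) →
          rowVal π 2 p = natE (2 * t + 2)) ∧
        ((2 * t + 2) ∈ π.parts → ¬ Marked π (2 * t + 2) 2 →
          rowVal π 2 p = natE (2 * t + 4) ∧ startType π p = 3 ∧
          ∃ i, 1 ≤ i ∧ i ≤ p ∧
            nth π 2 i = 2 * t + 4 + 4 * (p - i) ∧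
            (2 * t + 4 + 4 * (p - i) + 2) ∉ π.parts) }

/-- The first starting cluster index `p₁` of `π` (with `p₀ = p + 1`): the least
`j ≥ 1` such that `π^{(2)}_j = π^{(2)}_p + 4(p - j)` and all of
`π^{(2)}_j, …, π^{(2)}_p` have the same starting type as `π^{(2)}_p`. -/
def firstCluster (π : Partition) (p : ℕ) : ℕ :=
  ((List.range' 1 p).filter fun j =>
    (List.range' j (p + 1 - j)).all fun i =>
      decide (nth π 2 i = nth π 2 p + 4 * (p - i)) &&
      decide (startType π i = startType π p)).headD p

/-- The set `ℰ(k,r)` of partitions in `C(k,r)` with no odd parts. -/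
def E (k r : ℕ) : Set Partition :=
  { π | π ∈ C k r ∧ ∀ x ∈ π.parts, x % 2 = 0 }

/-- `C_<(k,r|m) = ⋃_{p+t=m} C_<(k,r|p,t)`. -/
noncomputable def Cltm (k r m : ℕ) : Set Partition :=
  { π | ∃ p t, p + t = m ∧ π ∈ Clt k r p t }

/-- `C_=(k,r|m) = ⋃_{p+t=m} C_=(k,r|p,t)`. -/
noncomputable def Ceqm (k r m : ℕ) : Set Partition :=
  { π | ∃ p t, p + t = m ∧ π ∈ Ceq k r p t }

/-- `I_N`: partitions into distinct odd parts, each at least `2N + 1`. -/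
def Iset (N : ℕ) : Set Partition :=
  { ζ | (∀ x ∈ ζ.parts, x % 2 = 1 ∧ 2 * N + 1 ≤ x) ∧ ζ.parts.Nodup }

/-- `F(3,3)`: pairs `(π, ζ)` with `π ∈ ℰ(3,3)` and `ζ ∈ I_{N₂(π)}`. -/
noncomputable def F33 : Set (Partition × Partition) :=
  { pq | pq.1 ∈ E 3 3 ∧ pq.2 ∈ Iset (Nmk pq.1 2) }


/-!
Parts in one row of `GG(π)` differ by at least `2`, so `π^{(2)}_{p+1} ≥ 2(N₂ - p) - 1`, which
exceeds `2t` as soon as `p + t < N₂`; hence `m ≥ N₂` is necessary.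

Conversely, let all parts of `π` be even. A part with mark at least `2` conflicts with a
`1`-marked part, which can only be the part itself or the part `2` below it; this is exactly what
rules out the junk case in the definition of starting types, so every `2`-marked part has one of
the types `s₀, …, s₃`. Let `p` be the largest index with `π^{(2)}_p ≥ 2(m - p) + 2`, equality
being allowed only for types `s₂, s₃`, and `t = m - p`. Then `π^{(2)}_{p+1} ≤ 2t`, with equality
only for types `s₀, s₁`, so `π ∈ C_<(k,r|p,t)`.
-/

lemma mex1_pos (s : List ℕ) : 0 < mex1 s := (Nat.find_spec (exists_pos_not_mem s)).1

lemma mex1_not_mem (s : List ℕ) : mex1 s ∉ s := (Nat.find_spec (exists_pos_not_mem s)).2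

lemma mem_of_pos_of_lt_mex1 {s : List ℕ} {n : ℕ} (h0 : 0 < n) (h : n < mex1 s) : n ∈ s := by
  by_contra hn
  exact Nat.find_min (exists_pos_not_mem s) h ⟨h0, hn⟩

lemma add_two_le_of_conflict_eq_false {p q : ℕ} (h : conflict p q = false) : q + 2 ≤ p := by
  unfold conflict at h
  split_ifs at h <;> simp only [decide_eq_false_iff_not] at h <;> omega

lemma conflict_eq_true_iff_of_even {p q : ℕ} (hp : p % 2 = 0) :
    conflict p q = true ↔ p - q ≤ 2 := by
  simp [conflict, hp]

structure IsGreedyMarking (acc : List (ℕ × ℕ)) : Prop where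
  pairwise : acc.Pairwise fun a b => b.1 ≤ a.1 ∧ (conflict a.1 b.1 = true → a.2 ≠ b.2)
  one_le : ∀ a ∈ acc, 1 ≤ a.2
  exists_conflict : ∀ a ∈ acc, ∀ m, 1 ≤ m → m < a.2 →
    ∃ b ∈ acc, b.1 ≤ a.1 ∧ conflict a.1 b.1 = true ∧ b.2 = m

lemma IsGreedyMarking.cons {acc : List (ℕ × ℕ)} (hacc : IsGreedyMarking acc) {p : ℕ}
    (hp : ∀ b ∈ acc, b.1 ≤ p) :
    IsGreedyMarking ((p, mex1 ((acc.filter fun q => conflict p q.1).map Prod.snd)) :: acc) := by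
  set M := (acc.filter fun q => conflict p q.1).map Prod.snd
  refine ⟨List.pairwise_cons.mpr ⟨fun b hb => ⟨hp b hb, fun hc hne => ?_⟩, hacc.pairwise⟩,
    List.forall_mem_cons.mpr ⟨mex1_pos M, hacc.one_le⟩,
    List.forall_mem_cons.mpr ⟨fun m hm1 hm2 => ?_, fun b hb m hm1 hm2 => ?_⟩⟩
  · have hmem : b.2 ∈ M := List.mem_map_of_mem (List.mem_filter.mpr ⟨hb, hc⟩)
    exact mex1_not_mem M (by rwa [← hne] at hmem)
  · obtain ⟨q, hq, rfl⟩ := List.mem_map.mp (mem_of_pos_of_lt_mex1 hm1 hm2)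
    obtain ⟨hqacc, hqc⟩ := List.mem_filter.mp hq
    exact ⟨q, List.mem_cons_of_mem _ hqacc, hp q hqacc, hqc, rfl⟩
  · obtain ⟨c, hc, hc'⟩ := hacc.exists_conflict b hb m hm1 hm2
    exact ⟨c, List.mem_cons_of_mem _ hc, hc'⟩

lemma isGreedyMarking_ggAux (l : List ℕ) :
    ∀ acc : List (ℕ × ℕ), l.Pairwise (· ≤ ·) → (∀ p ∈ l, ∀ b ∈ acc, b.1 ≤ p) →
      IsGreedyMarking acc → IsGreedyMarking (ggAux acc l) := by
  induction l with
  | nil => exact fun _ _ _ h => h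
  | cons p rest ih =>
    intro acc hsorted hle hacc
    obtain ⟨hp, hrest⟩ := List.pairwise_cons.mp hsorted
    refine ih _ hrest (fun q hq => List.forall_mem_cons.mpr ⟨hp q hq, ?_⟩)
      (hacc.cons (hle p List.mem_cons_self))
    exact hle q (List.mem_cons_of_mem _ hq)

lemma map_fst_ggAux (l : List ℕ) :
    ∀ acc : List (ℕ × ℕ), (ggAux acc l).map Prod.fst = l.reverse ++ acc.map Prod.fst := by
  induction l with
  | nil => simp [ggAux]
  | cons p rest ih => intro acc; simp [ggAux, ih]

lemma isGreedyMarking_ggMarks (π : Partition) : IsGreedyMarking (ggMarks π) :=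
  isGreedyMarking_ggAux _ [] (List.pairwise_reverse.mpr π.sorted) (by simp)
    ⟨List.Pairwise.nil, by simp, by simp⟩

lemma map_fst_ggMarks (π : Partition) : (ggMarks π).map Prod.fst = π.parts := by
  simpa [ggMarks] using map_fst_ggAux π.parts.reverse []

section Marked

variable {π : Partition} {x m : ℕ}

lemma Marked.mem (h : Marked π x m) : x ∈ π.parts :=
  map_fst_ggMarks π ▸ List.mem_map_of_mem h

lemma exists_marked_of_mem (h : x ∈ π.parts) : ∃ m, Marked π x m := by
  rw [← map_fst_ggMarks π] at h
  obtain ⟨⟨a, b⟩, hab, rfl⟩ := List.mem_map.mp h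
  exact ⟨b, hab⟩

lemma Marked.one_le (h : Marked π x m) : 1 ≤ m :=
  (isGreedyMarking_ggMarks π).one_le (x, m) h

lemma Marked.exists_conflict (h : Marked π x m) {m' : ℕ} (h1 : 1 ≤ m') (h2 : m' < m) :
    ∃ q ≤ x, conflict x q = true ∧ Marked π q m' := by
  obtain ⟨b, hb, hle, hc, rfl⟩ := (isGreedyMarking_ggMarks π).exists_conflict (x, m) h m' h1 h2
  exact ⟨b.1, hle, hc, hb⟩

lemma mem_row_iff {i : ℕ} : x ∈ row π i ↔ Marked π x i := by
  simp [row, Marked]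

end Marked

lemma row_pairwise (π : Partition) (i : ℕ) : (row π i).Pairwise fun x y => y + 2 ≤ x := by
  have hpw := (isGreedyMarking_ggMarks π).pairwise.sublist
    (List.filter_sublist (p := fun q => q.2 == i))
  refine List.pairwise_map.mpr (hpw.imp_of_mem fun ha hb hab => ?_)
  simp only [List.mem_filter, beq_iff_eq] at ha hb
  refine add_two_le_of_conflict_eq_false (Bool.eq_false_iff.mpr fun hc => ?_)
  exact hab.2 hc (ha.2.trans hb.2.symm)

lemma two_mul_length_sub_le_getElem_add_one {l : List ℕ} (hl : l.Pairwise fun x y => y + 2 ≤ x)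
    (hpos : ∀ x ∈ l, 0 < x) {i : ℕ} (hi : i < l.length) : 2 * (l.length - i) ≤ l[i] + 1 := by
  induction l generalizing i with
  | nil => simp at hi
  | cons a t ih =>
    obtain ⟨ha, ht⟩ := List.pairwise_cons.mp hl
    have htpos := fun x hx => hpos x (List.mem_cons_of_mem a hx)
    rcases i with _ | i
    · rcases t with _ | ⟨b, t⟩
      · have := hpos a List.mem_cons_self
        simp only [List.length_singleton, List.getElem_cons_zero]
        omega
      · have := ih ht htpos (i := 0) (by simp)
        have := ha b List.mem_cons_self
        simp_all only [List.length_cons, List.getElem_cons_zero]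
        omega
    · simpa using ih ht htpos (i := i) (by simpa using hi)

lemma nth_eq_getElem {π : Partition} {i j : ℕ} (h : j < (row π i).length) :
    nth π i (j + 1) = (row π i)[j] := by
  simp [nth, List.getElem?_eq_getElem h]

lemma natE_lt_natE {a b : ℕ} : natE a < natE b ↔ a < b := by
  simp [natE]

lemma natE_inj {a b : ℕ} : natE a = natE b ↔ a = b := by
  simp [natE]

lemma bot_lt_natE (a : ℕ) : ⊥ < natE a := EReal.bot_lt_coe _

lemma natE_lt_top (a : ℕ) : natE a < ⊤ := EReal.coe_lt_top _

lemma rowVal_eq_ite (π : Partition) (i j : ℕ) :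
    rowVal π i j = if j = 0 then ⊤ else if j ≤ Nmk π i then natE (nth π i j) else ⊥ := by
  unfold rowVal
  split_ifs with h0 hj
  · rfl
  · obtain ⟨j, rfl⟩ := Nat.exists_eq_add_one.mpr (Nat.pos_of_ne_zero h0)
    rw [Nat.add_sub_cancel, List.getElem?_eq_getElem (by rw [← Nmk]; omega),
      nth_eq_getElem (by rw [← Nmk]; omega)]
  · rw [List.getElem?_eq_none (by rw [← Nmk]; omega)]

section RowVal

variable {π : Partition} {i j a : ℕ}

lemma rowVal_lt_natE_iff :
    rowVal π i j < natE a ↔ j ≠ 0 ∧ (j ≤ Nmk π i → nth π i j < a) := by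
  rw [rowVal_eq_ite]
  split_ifs <;> simp_all [natE_lt_natE, bot_lt_natE]

lemma natE_lt_rowVal_iff :
    natE a < rowVal π i j ↔ j = 0 ∨ j ≤ Nmk π i ∧ a < nth π i j := by
  rw [rowVal_eq_ite]
  split_ifs <;> simp_all [natE_lt_natE, natE_lt_top]

lemma rowVal_eq_natE_iff :
    rowVal π i j = natE a ↔ j ≠ 0 ∧ j ≤ Nmk π i ∧ nth π i j = a := by
  rw [rowVal_eq_ite]
  split_ifs <;> simp_all [natE_inj, (bot_lt_natE _).ne, (natE_lt_top _).ne']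

end RowVal

theorem Nmk_two_le_of_mem_Clt {k r p t : ℕ} {π : Partition} (h : π ∈ Clt k r p t) :
    Nmk π 2 ≤ p + t := by
  obtain ⟨-, -, hlow, -⟩ := h
  by_contra! hlt
  have hp : p < (row π 2).length := by rw [← Nmk]; omega
  have hnth := rowVal_lt_natE_iff.mp hlow |>.2 (by omega)
  have hbound := two_mul_length_sub_le_getElem_add_one (row_pairwise π 2)
    (fun x hx => π.pos x (mem_row_iff.mp hx).mem) hp
  rw [nth_eq_getElem hp] at hnth
  rw [← Nmk] at hbound
  omega

section Even

variable {π : Partition} (heven : ∀ x ∈ π.parts, x % 2 = 0)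
include heven

lemma marked_one_or_marked_one_sub_two {x : ℕ} (hx : x ∈ π.parts) :
    Marked π x 1 ∨ Marked π (x - 2) 1 := by
  obtain ⟨m, hm⟩ := exists_marked_of_mem hx
  obtain rfl | hm2 := (show m = 1 ∨ 1 < m by have := hm.one_le; omega)
  · exact Or.inl hm
  obtain ⟨q, hqx, hc, hq⟩ := hm.exists_conflict le_rfl hm2
  rw [conflict_eq_true_iff_of_even (heven x hx)] at hc
  have := heven x hx
  have := heven q hq.mem
  have := π.pos q hq.mem
  obtain rfl | rfl : q = x ∨ q = x - 2 := by omega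
  exacts [Or.inl hq, Or.inr hq]

lemma bigL_eq_Nmk : bigL π = Nmk π 2 := by
  rw [bigL, List.filter_eq_self.mpr, List.length_range']
  intro j _
  simp only [decide_eq_true_eq]
  intro x hx hodd
  have := heven x hx
  omega

lemma startType_cases {j : ℕ} (hj1 : 1 ≤ j) (hj : j ≤ Nmk π 2) :
    startType π j = 0 ∨ startType π j = 1 ∨ startType π j = 2 ∨ startType π j = 3 := by
  obtain ⟨b, rfl⟩ := Nat.exists_eq_add_of_le' hj1
  have hb : b < (row π 2).length := hj
  have hvmem : nth π 2 (b + 1) ∈ π.parts := by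
    rw [nth_eq_getElem hb]
    exact (mem_row_iff.mp (List.getElem_mem hb)).mem
  have hv1 := marked_one_or_marked_one_sub_two heven hvmem
  have hv2 : nth π 2 (b + 1) + 2 ∈ π.parts →
      Marked π (nth π 2 (b + 1) + 2) 1 ∨ Marked π (nth π 2 (b + 1)) 1 := fun h => by
    simpa using marked_one_or_marked_one_sub_two heven h
  rw [startType, startPair, if_neg (by rw [bigL_eq_Nmk heven]; omega)]
  -- `hv1` and `hv2` rule out the junk branch `9` of `startPair`.
  dsimp only
  split_ifs <;> simp_all

end Even

theorem mem_Cltm_of_mem_E {k r m : ℕ} {π : Partition} (hπ : π ∈ E k r) (hm : Nmk π 2 ≤ m) :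
    π ∈ Cltm k r m := by
  obtain ⟨hC, heven⟩ := hπ
  let P : ℕ → Prop := fun p => 2 * (m - p) + 2 ≤ nth π 2 p ∧
    (nth π 2 p = 2 * (m - p) + 2 → startType π p = 2 ∨ startType π p = 3)
  obtain ⟨hle, hP, hnotP⟩ := Nat.findGreatest_eq_iff.mp (rfl : Nat.findGreatest P (Nmk π 2) = _)
  set p := Nat.findGreatest P (Nmk π 2)
  have hnext : p + 1 ≤ Nmk π 2 → ¬P (p + 1) := hnotP (Nat.lt_succ_self p)
  refine ⟨p, m - p, by omega, hC, fun x hx hodd => absurd (heven x hx) (by omega),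
    rowVal_lt_natE_iff.mpr ⟨p.succ_ne_zero, fun h => ?_⟩, natE_lt_rowVal_iff.mpr ?_,
    fun h => ?_, fun h => ?_⟩
  · have := hnext h
    omega
  · rcases Nat.eq_zero_or_pos p with h0 | h0
    · exact Or.inl h0
    · exact Or.inr ⟨hle, by have := (hP h0.ne').1; omega⟩
  · obtain ⟨hp0, -, hval⟩ := rowVal_eq_natE_iff.mp h
    exact (hP hp0).2 (by omega)
  · obtain ⟨-, hp1, hval⟩ := rowVal_eq_natE_iff.mp h
    have := hnext hp1
    have := startType_cases heven (Nat.le_add_left 1 p) hp1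
    omega

theorem E_mem_Cltm_iff_general (k r m N₂ : ℕ)
    (π : Partition) (hπ : π ∈ E k r) (hN : Nmk π 2 = N₂) :
    π ∈ Cltm k r m ↔ N₂ ≤ m := by
  subst hN
  constructor
  · rintro ⟨p, t, rfl, h⟩
    exact Nmk_two_le_of_mem_Clt h
  · exact mem_Cltm_of_mem_E hπ

/-- Theorem 5.2: a partition `π ∈ ℰ(k,r)` with `N₂` parts marked `2` lies in
`C_<(k,r|m)` if and only if `m ≥ N₂`. -/
theorem E_mem_Cltm_iff (k r m N₂ : ℕ) (hrk : r ≤ k) (hr : 3 ≤ r)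
    (π : Partition) (hπ : π ∈ E k r) (hN : Nmk π 2 = N₂) :
    π ∈ Cltm k r m ↔ N₂ ≤ m :=
  E_mem_Cltm_iff_general k r m N₂ π hπ hN

end Bressoud
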